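/- arXiv:0812.3463 — 2 statements merged into one kernel-verified Lean document; each statement's English description precedes it below -/
import Mathlib

section
/- Let d ≥ 2 and α satisfy (d−1)/2 < α < d/2. Then for every u ∈ ℝ^d, the integral ∫_{ℝ^d} dq / (|u + q| · ⟨q⟩^{2α}) is finite. -/
/-!
The integrand has one singularity, at `q = -u`, where it behaves like `‖u + q‖⁻¹`; this is locally
integrable because `d ≥ 2`. Away from it `‖u + q‖` dominates `⟨q⟩ = (1 + ‖q‖²)^{1/2}` up to a
constant, so the integrand is `O(⟨q⟩^{-(1 + 2α)})`, which is integrable because `1 + 2α > d`.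
-/

open MeasureTheory Asymptotics Filter Module

section
variable {E : Type*} [NormedAddCommGroup E]

lemma one_div_norm_add_mul_rpow_le {u q : E} (α : ℝ) (h : 1 ≤ ‖u + q‖) :
    1 / (‖u + q‖ * (1 + ‖q‖ ^ 2) ^ α) ≤ (2 + ‖u‖) * (1 + ‖q‖ ^ 2) ^ (-(1 + 2 * α) / 2) := by
  have hpos : 0 < 1 + ‖q‖ ^ 2 := by positivity
  have hbracket : √(1 + ‖q‖ ^ 2) ≤ (2 + ‖u‖) * ‖u + q‖ := by
    nlinarith [sqrt_one_add_norm_sq_le q, norm_le_add_norm_add' u q, norm_nonneg u]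
  have hsplit : (1 + ‖q‖ ^ 2) ^ (-(1 + 2 * α) / 2) =
      (√(1 + ‖q‖ ^ 2) * (1 + ‖q‖ ^ 2) ^ α)⁻¹ := by
    rw [Real.sqrt_eq_rpow, ← Real.rpow_add hpos, ← Real.rpow_neg hpos.le]
    ring_nf
  rw [hsplit, ← div_eq_mul_inv, div_le_div_iff₀ (by positivity) (by positivity)]
  calc 1 * (√(1 + ‖q‖ ^ 2) * (1 + ‖q‖ ^ 2) ^ α)
      ≤ (2 + ‖u‖) * ‖u + q‖ * (1 + ‖q‖ ^ 2) ^ α := by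
        rw [one_mul]; gcongr
    _ = (2 + ‖u‖) * (‖u + q‖ * (1 + ‖q‖ ^ 2) ^ α) := by ring

lemma one_div_norm_add_mul_rpow_isBigO [ProperSpace E] (u : E) (α : ℝ) :
    (fun q : E => 1 / (‖u + q‖ * (1 + ‖q‖ ^ 2) ^ α)) =O[cocompact E]
      fun q => (1 + ‖q‖ ^ 2) ^ (-(1 + 2 * α) / 2) := by
  refine IsBigO.of_bound (2 + ‖u‖) ?_
  filter_upwards [tendsto_norm_cocompact_atTop.eventually_ge_atTop (1 + ‖u‖)] with q hq
  rw [Real.norm_of_nonneg (by positivity), Real.norm_of_nonneg (by positivity)]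
  exact one_div_norm_add_mul_rpow_le α (by linarith [norm_le_add_norm_add' u q])

variable [NormedSpace ℝ E] [FiniteDimensional ℝ E] [MeasurableSpace E] [BorelSpace E]
  {μ : Measure E} [μ.IsAddHaarMeasure]

lemma locallyIntegrable_inv_norm_add (hE : 1 < finrank ℝ E) (u : E) :
    LocallyIntegrable (fun q : E => ‖u + q‖⁻¹) μ := by
  have h0 : LocallyIntegrable (fun x : E => ‖x‖⁻¹) μ :=
    locallyIntegrable_of_norm_le_rpow (C := 1) (α := 1) hE.le (by exact_mod_cast hE)
      (ae_of_all _ fun x => by simp [Real.rpow_neg_one]) (by fun_prop)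
  rw [← map_add_left_eq_self μ u] at h0
  exact (locallyIntegrable_map_homeomorph (Homeomorph.addLeft u)).1 h0

lemma integrable_one_div_norm_add_mul_rpow (hE : 1 < finrank ℝ E) {α : ℝ}
    (hα : (finrank ℝ E : ℝ) < 1 + 2 * α) (u : E) :
    Integrable (fun q : E => 1 / (‖u + q‖ * (1 + ‖q‖ ^ 2) ^ α)) μ := by
  have hweight : Continuous fun q : E => ((1 + ‖q‖ ^ 2) ^ α)⁻¹ := by
    have hpos (q : E) : 0 < 1 + ‖q‖ ^ 2 := by positivity
    exact ((continuous_const.add (continuous_norm.pow 2)).rpow_const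
      fun q => Or.inl (hpos q).ne').inv₀ fun q => (Real.rpow_pos_of_pos (hpos q) α).ne'
  have hloc : LocallyIntegrable (fun q : E => 1 / (‖u + q‖ * (1 + ‖q‖ ^ 2) ^ α)) μ := by
    simp only [one_div, mul_inv]
    exact (locallyIntegrable_inv_norm_add hE u).mul_continuous hweight
  exact hloc.integrable_of_isBigO_cocompact (one_div_norm_add_mul_rpow_isBigO u α)
    ((integrable_rpow_neg_one_add_norm_sq hα).integrableAtFilter _)

end

theorem stmt4_general (d : ℕ) (hd : 2 ≤ d) (α : ℝ)
    (h1 : ((d : ℝ) - 1) / 2 < α)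
    (u : EuclideanSpace ℝ (Fin d)) :
    MeasureTheory.Integrable (fun q : EuclideanSpace ℝ (Fin d) =>
      1 / (‖u + q‖ * (1 + ‖q‖ ^ 2) ^ α)) := by
  have hdim : 1 < finrank ℝ (EuclideanSpace ℝ (Fin d)) := by
    rw [finrank_euclideanSpace_fin]; omega
  have hdecay : (finrank ℝ (EuclideanSpace ℝ (Fin d)) : ℝ) < 1 + 2 * α := by
    rw [finrank_euclideanSpace_fin]; linarith
  exact integrable_one_div_norm_add_mul_rpow hdim hdecay u

/-- For `d ≥ 2` and `(d−1)/2 < α < d/2`, the integral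
`∫_{ℝ^d} dq / (|u+q| ⟨q⟩^{2α})` is finite for every `u ∈ ℝ^d`. -/
theorem stmt4 (d : ℕ) (hd : 2 ≤ d) (α : ℝ)
    (h1 : ((d : ℝ) - 1) / 2 < α) (h2 : α < (d : ℝ) / 2)
    (u : EuclideanSpace ℝ (Fin d)) :
    MeasureTheory.Integrable (fun q : EuclideanSpace ℝ (Fin d) =>
      1 / (‖u + q‖ * (1 + ‖q‖ ^ 2) ^ α)) :=
  stmt4_general d hd α h1 u
end

section
/- Let α > 0 and let χ : ℝ^d → [0,1] be a smooth function with χ(u) = 1 for |u| ≤ 1/2 and χ(u) = 0 for |u| > 1. Set g(q) := χ(q) + (1 − χ(q))|q|^{−2α}. Then there exists a Gaussian h(u) = c₁ e^{−c₂|u|²} with c₁, c₂ > 0 such that ⟨q⟩^{−2α} ≤ (h * g)(q) for all q ∈ ℝ^d. -/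
open MeasureTheory Real

private lemma gauss_integrable' (d : ℕ) {b : ℝ} (hb : 0 < b) :
    Integrable (fun v : EuclideanSpace ℝ (Fin d) => Real.exp (-b * ‖v‖ ^ 2)) := by
  have h := (GaussianFourier.integrable_cexp_neg_mul_sq_norm_add
      (b := (b : ℂ)) (by simpa using hb) 0 (0 : EuclideanSpace ℝ (Fin d))).norm
  convert h using 2 with v
  simp [Complex.norm_exp, ← Complex.ofReal_pow]

/-- Majorization of the Japanese-bracket weight by a convolution: given a smooth
cutoff `χ` with `χ = 1` on `{|u| ≤ 1/2}` and `χ = 0` on `{|u| > 1}`, and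
`g(q) = χ(q) + (1−χ(q))|q|^{−2α}`, there is a Gaussian `h(u) = c₁ e^{−c₂|u|²}`
with `⟨q⟩^{−2α} ≤ (h * g)(q)` for all `q`. -/
theorem stmt17 (d : ℕ) (hd : 1 ≤ d) (α : ℝ) (hα : 0 < α)
    (χ : EuclideanSpace ℝ (Fin d) → ℝ) (hχ : ContDiff ℝ (⊤ : ℕ∞) χ)
    (hχ01 : ∀ u, χ u ∈ Set.Icc (0 : ℝ) 1)
    (hχ1 : ∀ u : EuclideanSpace ℝ (Fin d), ‖u‖ ≤ 1 / 2 → χ u = 1)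
    (hχ0 : ∀ u : EuclideanSpace ℝ (Fin d), 1 < ‖u‖ → χ u = 0) :
    ∃ c₁ > (0 : ℝ), ∃ c₂ > (0 : ℝ),
      ∀ q : EuclideanSpace ℝ (Fin d),
        (1 + ‖q‖ ^ 2) ^ (-α) ≤
          ∫ y, (c₁ * Real.exp (-c₂ * ‖y‖ ^ 2)) *
            (χ (q - y) + (1 - χ (q - y)) * ‖q - y‖ ^ (-(2 * α))) := by
  have h2a : (0 : ℝ) < 2 * α := by linarith
  set I : ℝ := (π / (2 * α)) ^ ((d : ℝ) / 2) with hIdef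
  have hIpos : 0 < I := Real.rpow_pos_of_pos (div_pos Real.pi_pos h2a) _
  have hIval : ∫ v : EuclideanSpace ℝ (Fin d), Real.exp (-(2 * α) * ‖v‖ ^ 2) = I := by
    rw [GaussianFourier.integral_rexp_neg_mul_sq_norm h2a]
    simp [hIdef]
  set c₁ : ℝ := (2 : ℝ) ^ α / I with hc₁def
  have hc₁pos : 0 < c₁ := div_pos (Real.rpow_pos_of_pos two_pos α) hIpos
  set B : ℝ := (1 / 2 : ℝ) ^ (-(2 * α)) with hBdef
  have hBpos : 0 < B := Real.rpow_pos_of_pos (by norm_num) _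
  have hg : ∀ u : EuclideanSpace ℝ (Fin d),
      (1 + ‖u‖ ^ 2) ^ (-α) ≤ χ u + (1 - χ u) * ‖u‖ ^ (-(2 * α)) := by
    intro u
    have h1 : (1 + ‖u‖ ^ 2) ^ (-α) ≤ 1 :=
      Real.rpow_le_one_of_one_le_of_nonpos (by nlinarith [sq_nonneg ‖u‖]) (by linarith)
    rcases le_or_gt ‖u‖ (1 / 2) with h | h
    · rw [hχ1 u h]
      simpa using h1
    · have hn : (0 : ℝ) < ‖u‖ := by linarith
      have h2 : (1 + ‖u‖ ^ 2) ^ (-α) ≤ ‖u‖ ^ (-(2 * α)) := by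
        have he : (‖u‖ ^ 2 : ℝ) ^ (-α) = ‖u‖ ^ (-(2 * α)) := by
          rw [← Real.rpow_natCast ‖u‖ 2, ← Real.rpow_mul (norm_nonneg u)]
          norm_num
        rw [← he]
        exact Real.rpow_le_rpow_of_nonpos (by positivity) (by linarith) (by linarith)
      obtain ⟨hχa, hχb⟩ := hχ01 u
      nlinarith [mul_nonneg hχa (sub_nonneg.2 h1),
        mul_nonneg (sub_nonneg.2 hχb) (sub_nonneg.2 h2)]
  have hgub : ∀ u : EuclideanSpace ℝ (Fin d),
      χ u + (1 - χ u) * ‖u‖ ^ (-(2 * α)) ≤ 1 + B := by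
    intro u
    rcases le_or_gt ‖u‖ (1 / 2) with h | h
    · rw [hχ1 u h]; simpa using hBpos.le
    · have ht : ‖u‖ ^ (-(2 * α)) ≤ B :=
        Real.rpow_le_rpow_of_nonpos (by norm_num) h.le (by linarith)
      have htn : (0 : ℝ) ≤ ‖u‖ ^ (-(2 * α)) := Real.rpow_nonneg (norm_nonneg u) _
      obtain ⟨hχa, hχb⟩ := hχ01 u
      nlinarith [mul_nonneg hχa hBpos.le,
        mul_nonneg (sub_nonneg.2 hχb) (sub_nonneg.2 ht)]
  have hgnn : ∀ u : EuclideanSpace ℝ (Fin d),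
      0 ≤ χ u + (1 - χ u) * ‖u‖ ^ (-(2 * α)) := by
    intro u
    obtain ⟨hχa, hχb⟩ := hχ01 u
    have htn : (0 : ℝ) ≤ ‖u‖ ^ (-(2 * α)) := Real.rpow_nonneg (norm_nonneg u) _
    nlinarith [mul_nonneg (sub_nonneg.2 hχb) htn]
  refine ⟨c₁, hc₁pos, α, hα, fun q => ?_⟩
  set A : ℝ := 1 + ‖q‖ ^ 2 with hAdef
  have hApos : (0 : ℝ) < A := by positivity
  have key : ∀ y : EuclideanSpace ℝ (Fin d),
      (2 : ℝ) ^ (-α) * A ^ (-α) * Real.exp (-α * ‖y‖ ^ 2)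
      ≤ (1 + ‖q - y‖ ^ 2) ^ (-α) := by
    intro y
    have htri : ‖q - y‖ ≤ ‖q‖ + ‖y‖ := norm_sub_le q y
    have h1 : 1 + ‖q - y‖ ^ 2 ≤ 2 * A * (1 + ‖y‖ ^ 2) := by
      have h0 : (0 : ℝ) ≤ ‖q - y‖ := norm_nonneg _
      nlinarith [sq_nonneg (‖q‖ - ‖y‖), sq_nonneg (‖q‖ * ‖y‖), sq_nonneg ‖q‖, sq_nonneg ‖y‖]
    have h2 : (2 * A * (1 + ‖y‖ ^ 2)) ^ (-α) ≤ (1 + ‖q - y‖ ^ 2) ^ (-α) :=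
      Real.rpow_le_rpow_of_nonpos (by positivity) h1 (by linarith)
    have h3 : (2 * A * (1 + ‖y‖ ^ 2)) ^ (-α)
        = (2 : ℝ) ^ (-α) * A ^ (-α) * (1 + ‖y‖ ^ 2) ^ (-α) := by
      rw [Real.mul_rpow (by positivity) (by positivity),
        Real.mul_rpow (by norm_num) hApos.le]
    have h4 : Real.exp (-α * ‖y‖ ^ 2) ≤ (1 + ‖y‖ ^ 2) ^ (-α) := by
      have hle : 1 + ‖y‖ ^ 2 ≤ Real.exp (‖y‖ ^ 2) := by
        have := Real.add_one_le_exp (‖y‖ ^ 2); linarith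
      have hstep := Real.rpow_le_rpow_of_nonpos (by positivity : (0:ℝ) < 1 + ‖y‖ ^ 2)
        hle (by linarith : -α ≤ 0)
      calc Real.exp (-α * ‖y‖ ^ 2) = Real.exp (‖y‖ ^ 2) ^ (-α) := by
            rw [← Real.exp_mul]; ring_nf
        _ ≤ (1 + ‖y‖ ^ 2) ^ (-α) := hstep
    calc (2 : ℝ) ^ (-α) * A ^ (-α) * Real.exp (-α * ‖y‖ ^ 2)
        ≤ (2 : ℝ) ^ (-α) * A ^ (-α) * (1 + ‖y‖ ^ 2) ^ (-α) :=
          mul_le_mul_of_nonneg_left h4 (by positivity)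
      _ = (2 * A * (1 + ‖y‖ ^ 2)) ^ (-α) := h3.symm
      _ ≤ (1 + ‖q - y‖ ^ 2) ^ (-α) := h2
  have hpt : ∀ y : EuclideanSpace ℝ (Fin d),
      A ^ (-α) / I * Real.exp (-(2 * α) * ‖y‖ ^ 2)
      ≤ (c₁ * Real.exp (-α * ‖y‖ ^ 2)) *
        (χ (q - y) + (1 - χ (q - y)) * ‖q - y‖ ^ (-(2 * α))) := by
    intro y
    have hchain : (2 : ℝ) ^ (-α) * A ^ (-α) * Real.exp (-α * ‖y‖ ^ 2)
        ≤ χ (q - y) + (1 - χ (q - y)) * ‖q - y‖ ^ (-(2 * α)) :=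
      (key y).trans (hg (q - y))
    have hstep : (c₁ * Real.exp (-α * ‖y‖ ^ 2)) *
        ((2 : ℝ) ^ (-α) * A ^ (-α) * Real.exp (-α * ‖y‖ ^ 2))
        ≤ (c₁ * Real.exp (-α * ‖y‖ ^ 2)) *
          (χ (q - y) + (1 - χ (q - y)) * ‖q - y‖ ^ (-(2 * α))) :=
      mul_le_mul_of_nonneg_left hchain (by positivity)
    refine le_trans (le_of_eq ?_) hstep
    have e1 : Real.exp (-α * ‖y‖ ^ 2) * Real.exp (-α * ‖y‖ ^ 2)
        = Real.exp (-(2 * α) * ‖y‖ ^ 2) := by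
      rw [← Real.exp_add]; ring_nf
    have e2 : (2 : ℝ) ^ α * (2 : ℝ) ^ (-α) = 1 := by
      rw [← Real.rpow_add two_pos]; simp
    calc A ^ (-α) / I * Real.exp (-(2 * α) * ‖y‖ ^ 2)
        = ((2 : ℝ) ^ α * (2 : ℝ) ^ (-α)) * (A ^ (-α) / I) *
            (Real.exp (-α * ‖y‖ ^ 2) * Real.exp (-α * ‖y‖ ^ 2)) := by rw [e1, e2]; ring
      _ = (c₁ * Real.exp (-α * ‖y‖ ^ 2)) *
            ((2 : ℝ) ^ (-α) * A ^ (-α) * Real.exp (-α * ‖y‖ ^ 2)) := by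
          rw [hc₁def]; ring
  have hLint : Integrable (fun y : EuclideanSpace ℝ (Fin d) =>
      A ^ (-α) / I * Real.exp (-(2 * α) * ‖y‖ ^ 2)) :=
    (gauss_integrable' d h2a).const_mul _
  have hαint : Integrable (fun y : EuclideanSpace ℝ (Fin d) =>
      Real.exp (-α * ‖y‖ ^ 2)) := gauss_integrable' d hα
  have hfmeas : AEStronglyMeasurable
      (fun y : EuclideanSpace ℝ (Fin d) => (c₁ * Real.exp (-α * ‖y‖ ^ 2)) *
      (χ (q - y) + (1 - χ (q - y)) * ‖q - y‖ ^ (-(2 * α)))) volume := by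
    have hc : Continuous fun y : EuclideanSpace ℝ (Fin d) => q - y :=
      continuous_const.sub continuous_id
    have h1 : Measurable fun y : EuclideanSpace ℝ (Fin d) => χ (q - y) := by
      exact (hχ.continuous.comp hc).measurable
    have h2 : Measurable fun y : EuclideanSpace ℝ (Fin d) => ‖q - y‖ ^ (-(2 * α)) := by
      fun_prop
    have h3 : Measurable fun y : EuclideanSpace ℝ (Fin d) => Real.exp (-α * ‖y‖ ^ 2) := by
      fun_prop
    exact ((measurable_const.mul h3).mul
      (h1.add ((measurable_const.sub h1).mul h2))).aestronglyMeasurable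
  have hfint : Integrable (fun y : EuclideanSpace ℝ (Fin d) =>
      (c₁ * Real.exp (-α * ‖y‖ ^ 2)) *
      (χ (q - y) + (1 - χ (q - y)) * ‖q - y‖ ^ (-(2 * α)))) := by
    refine Integrable.mono' ((hαint.const_mul (c₁ * (1 + B)))) hfmeas ?_
    filter_upwards with y
    have hfy : 0 ≤ (c₁ * Real.exp (-α * ‖y‖ ^ 2)) *
        (χ (q - y) + (1 - χ (q - y)) * ‖q - y‖ ^ (-(2 * α))) :=
      mul_nonneg (by positivity) (hgnn (q - y))
    rw [Real.norm_eq_abs, abs_of_nonneg hfy]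
    calc (c₁ * Real.exp (-α * ‖y‖ ^ 2)) *
          (χ (q - y) + (1 - χ (q - y)) * ‖q - y‖ ^ (-(2 * α)))
        ≤ (c₁ * Real.exp (-α * ‖y‖ ^ 2)) * (1 + B) :=
          mul_le_mul_of_nonneg_left (hgub (q - y)) (by positivity)
      _ = c₁ * (1 + B) * Real.exp (-α * ‖y‖ ^ 2) := by ring
  have hmono := integral_mono hLint hfint hpt
  have hLval : ∫ y : EuclideanSpace ℝ (Fin d),
      A ^ (-α) / I * Real.exp (-(2 * α) * ‖y‖ ^ 2) = A ^ (-α) := by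
    rw [integral_const_mul, hIval]
    field_simp
  rw [hLval] at hmono
  exact hmono
end
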